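/- Let G be a finite subgroup of SO(3) × SO(3), where SO(3) is the group of 3×3 real special orthogonal matrices, acting componentwise on S² × S² (matrices acting on the unit sphere S² ⊂ ℝ³). Assume the action is pseudofree: for every (g, h) ∈ G with (g, h) ≠ (1, 1), the fixed-point set {(x, y) ∈ S² × S² : g x = x and h y = y} is finite. Then the two projection homomorphisms π₁, π₂ : G → SO(3) are injective on G, and there is a group isomorphism ψ : π₁(G) → π₂(G) such that G = {(g, ψ(g)) : g ∈ π₁(G)}. In particular, G is isomorphic to a finite subgroup of SO(3). -/

import Mathlib

/-- The subgroup `SO(3)` of the orthogonal group `O(3)`: 3×3 real orthogonal matrices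
of determinant 1. -/
noncomputable def SO3 : Subgroup (Matrix.orthogonalGroup (Fin 3) ℝ) where
  carrier := {A | ((A : Matrix (Fin 3) (Fin 3) ℝ)).det = 1}
  one_mem' := by simp
  mul_mem' := by
    intro a b ha hb
    rw [Set.mem_setOf_eq] at ha hb ⊢
    push_cast
    rw [Matrix.det_mul, ha, hb, mul_one]
  inv_mem' := by
    intro a ha
    rw [Set.mem_setOf_eq] at ha ⊢
    have h : ((a : Matrix (Fin 3) (Fin 3) ℝ)) *
        ((a⁻¹ : Matrix.orthogonalGroup (Fin 3) ℝ) : Matrix (Fin 3) (Fin 3) ℝ) = 1 := by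
      rw [← MulMemClass.coe_mul, mul_inv_cancel, OneMemClass.coe_one]
    have := congrArg Matrix.det h
    rw [Matrix.det_mul, ha, one_mul, Matrix.det_one] at this
    exact this

/-- The matrix underlying an element of `SO(3)`. -/
noncomputable def so3Mat (g : SO3) : Matrix (Fin 3) (Fin 3) ℝ :=
  ((g : Matrix.orthogonalGroup (Fin 3) ℝ) : Matrix (Fin 3) (Fin 3) ℝ)

lemma so3Mat_det (g : SO3) : (so3Mat g).det = 1 := g.2

open Matrix in
lemma so3Mat_orth (g : SO3) : (so3Mat g)ᵀ * so3Mat g = 1 := by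
  have h := (g : Matrix.orthogonalGroup (Fin 3) ℝ).2
  rw [Matrix.mem_unitaryGroup_iff'] at h
  simpa [so3Mat, Matrix.star_eq_conjTranspose, Matrix.conjTranspose_eq_transpose_of_trivial] using h

lemma so3Mat_one : so3Mat (1 : SO3) = 1 := rfl

open Matrix in
lemma exists_fixed_unit (g : SO3) :
    ∃ v : EuclideanSpace ℝ (Fin 3), ‖v‖ = 1 ∧ Matrix.toEuclideanLin (so3Mat g) v = v := by
  set M := so3Mat g with hM
  have hdet : M.det = 1 := so3Mat_det g
  have horth : Mᵀ * M = 1 := so3Mat_orth g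
  have hsub : Mᵀ - 1 = Mᵀ * (1 - M) := by rw [mul_sub, mul_one, horth]
  have hdetT : Mᵀ.det = 1 := by rw [Matrix.det_transpose, hdet]
  have hkey : (M - 1).det = 0 := by
    have h1 : (M - 1).det = (Mᵀ - 1).det := by
      rw [← Matrix.det_transpose (M - 1), Matrix.transpose_sub, Matrix.transpose_one]
    have h2 : (Mᵀ - 1).det = (1 - M).det := by
      rw [hsub, Matrix.det_mul, hdetT, one_mul]
    have h3 : (1 - M).det = -(M - 1).det := by
      rw [← neg_sub M 1, Matrix.det_neg, Fintype.card_fin]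
      ring
    have := h1.trans (h2.trans h3)
    linarith
  obtain ⟨v, hv0, hv⟩ := (Matrix.exists_mulVec_eq_zero_iff).mpr hkey
  have hMv : M *ᵥ v = v := by
    have := hv
    rw [Matrix.sub_mulVec, Matrix.one_mulVec, sub_eq_zero] at this
    exact this
  set w : EuclideanSpace ℝ (Fin 3) := (WithLp.equiv 2 (Fin 3 → ℝ)).symm v with hw
  have hw0 : w ≠ 0 := by
    intro h
    apply hv0
    have := congrArg (WithLp.equiv 2 (Fin 3 → ℝ)) h
    rw [hw, Equiv.apply_symm_apply] at this
    simpa using this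
  have hwfix : Matrix.toEuclideanLin M w = w := by
    rw [hw, WithLp.equiv_symm_apply, Matrix.toEuclideanLin_apply_piLp_toLp, hMv]
  refine ⟨‖w‖⁻¹ • w, ?_, ?_⟩
  · rw [norm_smul, norm_inv, norm_norm, inv_mul_cancel₀ (norm_ne_zero_iff.mpr hw0)]
  · rw [LinearMap.map_smul, hwfix]

lemma sphere_infinite : {p : EuclideanSpace ℝ (Fin 3) | ‖p‖ = 1}.Infinite := by
  have hrank : 1 < Module.rank ℝ (EuclideanSpace ℝ (Fin 3)) := by
    rw [← Module.finrank_eq_rank]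
    norm_cast
    simp [finrank_euclideanSpace]
  have hconn := isConnected_sphere hrank (0 : EuclideanSpace ℝ (Fin 3)) (zero_le_one)
  have hset : Metric.sphere (0 : EuclideanSpace ℝ (Fin 3)) 1
      = {p : EuclideanSpace ℝ (Fin 3) | ‖p‖ = 1} := by
    ext p; simp [mem_sphere_zero_iff_norm]
  rw [hset] at hconn
  refine hconn.isPreconnected.infinite_of_nontrivial ?_
  refine ⟨EuclideanSpace.single 0 1, by simp [EuclideanSpace.norm_single],
    EuclideanSpace.single 1 1, by simp [EuclideanSpace.norm_single], ?_⟩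
  intro h
  have h0 : (EuclideanSpace.single (0 : Fin 3) (1:ℝ)) 0
      = (EuclideanSpace.single (1 : Fin 3) (1:ℝ)) 0 := by rw [h]
  simp [EuclideanSpace.single_apply] at h0

set_option maxHeartbeats 1000000 in
/-- A finite subgroup of `SO(3) × SO(3)` acting pseudofreely (componentwise) on
`S² × S²` projects injectively to each factor, and is the graph of an isomorphism `ψ`
between its two projections; in particular it is isomorphic to a finite subgroup of
`SO(3)`. -/
theorem pseudofree_so3_prod_subgroup_is_graph
    (G : Subgroup (SO3 × SO3)) [Finite G]
    (hpf : ∀ g : SO3 × SO3, g ∈ G → g ≠ 1 →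
      {p : EuclideanSpace ℝ (Fin 3) × EuclideanSpace ℝ (Fin 3) |
        ‖p.1‖ = 1 ∧ ‖p.2‖ = 1 ∧
        Matrix.toEuclideanLin (so3Mat g.1) p.1 = p.1 ∧
        Matrix.toEuclideanLin (so3Mat g.2) p.2 = p.2}.Finite) :
    Function.Injective (fun g : G => ((g : SO3 × SO3)).1) ∧
    Function.Injective (fun g : G => ((g : SO3 × SO3)).2) ∧
    Nonempty (G ≃* G.map (MonoidHom.fst SO3 SO3)) ∧
    ∃ ψ : G.map (MonoidHom.fst SO3 SO3) ≃* G.map (MonoidHom.snd SO3 SO3),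
      ∀ x : SO3 × SO3, x ∈ G ↔
        ∃ h : x.1 ∈ G.map (MonoidHom.fst SO3 SO3), (ψ ⟨x.1, h⟩ : SO3) = x.2 := by
  classical
  have hker1 : ∀ x : SO3 × SO3, x ∈ G → x.1 = 1 → x = 1 := by
    intro x hx h1
    by_contra hne
    obtain ⟨v, hv, hvfix⟩ := exists_fixed_unit x.2
    have hfin := hpf x hx hne
    have hsub : (fun p : EuclideanSpace ℝ (Fin 3) => (p, v)) '' {p | ‖p‖ = 1} ⊆
        {p : EuclideanSpace ℝ (Fin 3) × EuclideanSpace ℝ (Fin 3) |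
          ‖p.1‖ = 1 ∧ ‖p.2‖ = 1 ∧
          Matrix.toEuclideanLin (so3Mat x.1) p.1 = p.1 ∧
          Matrix.toEuclideanLin (so3Mat x.2) p.2 = p.2} := by
      rintro _ ⟨p, hp, rfl⟩
      refine ⟨hp, hv, ?_, hvfix⟩
      rw [h1, so3Mat_one]
      simp [Matrix.toEuclideanLin_apply, Matrix.one_mulVec]
    have hinf : ((fun p : EuclideanSpace ℝ (Fin 3) => (p, v)) '' {p | ‖p‖ = 1}).Infinite := by
      apply sphere_infinite.image
      intro a _ b _ hab
      exact (Prod.ext_iff.mp hab).1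
    exact hinf (hfin.subset hsub)
  have hker2 : ∀ x : SO3 × SO3, x ∈ G → x.2 = 1 → x = 1 := by
    intro x hx h2
    by_contra hne
    obtain ⟨v, hv, hvfix⟩ := exists_fixed_unit x.1
    have hfin := hpf x hx hne
    have hsub : (fun p : EuclideanSpace ℝ (Fin 3) => (v, p)) '' {p | ‖p‖ = 1} ⊆
        {p : EuclideanSpace ℝ (Fin 3) × EuclideanSpace ℝ (Fin 3) |
          ‖p.1‖ = 1 ∧ ‖p.2‖ = 1 ∧
          Matrix.toEuclideanLin (so3Mat x.1) p.1 = p.1 ∧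
          Matrix.toEuclideanLin (so3Mat x.2) p.2 = p.2} := by
      rintro _ ⟨p, hp, rfl⟩
      refine ⟨hv, hp, hvfix, ?_⟩
      rw [h2, so3Mat_one]
      simp [Matrix.toEuclideanLin_apply, Matrix.one_mulVec]
    have hinf : ((fun p : EuclideanSpace ℝ (Fin 3) => (v, p)) '' {p | ‖p‖ = 1}).Infinite := by
      apply sphere_infinite.image
      intro a _ b _ hab
      exact (Prod.ext_iff.mp hab).2
    exact hinf (hfin.subset hsub)
  set f₁ : ↥G →* SO3 := (MonoidHom.fst SO3 SO3).comp G.subtype with hf₁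
  set f₂ : ↥G →* SO3 := (MonoidHom.snd SO3 SO3).comp G.subtype with hf₂
  have hinj1 : Function.Injective f₁ := by
    rw [injective_iff_map_eq_one]
    intro g hg
    exact Subtype.ext (hker1 (g : SO3 × SO3) g.2 hg)
  have hinj2 : Function.Injective f₂ := by
    rw [injective_iff_map_eq_one]
    intro g hg
    exact Subtype.ext (hker2 (g : SO3 × SO3) g.2 hg)
  set f₁' : ↥G →* ↥(G.map (MonoidHom.fst SO3 SO3)) :=
    f₁.codRestrict _ (fun g => Subgroup.mem_map.mpr ⟨(g : SO3 × SO3), g.2, rfl⟩) with hf₁'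
  set f₂' : ↥G →* ↥(G.map (MonoidHom.snd SO3 SO3)) :=
    f₂.codRestrict _ (fun g => Subgroup.mem_map.mpr ⟨(g : SO3 × SO3), g.2, rfl⟩) with hf₂'
  have hbij1 : Function.Bijective f₁' := by
    constructor
    · intro a b h
      exact hinj1 (congrArg Subtype.val h)
    · rintro ⟨y, hy⟩
      obtain ⟨x, hxG, hx⟩ := Subgroup.mem_map.mp hy
      exact ⟨⟨x, hxG⟩, Subtype.ext hx⟩
  have hbij2 : Function.Bijective f₂' := by
    constructor
    · intro a b h
      exact hinj2 (congrArg Subtype.val h)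
    · rintro ⟨y, hy⟩
      obtain ⟨x, hxG, hx⟩ := Subgroup.mem_map.mp hy
      exact ⟨⟨x, hxG⟩, Subtype.ext hx⟩
  set e₁ : ↥G ≃* ↥(G.map (MonoidHom.fst SO3 SO3)) := MulEquiv.ofBijective f₁' hbij1 with he₁
  set e₂ : ↥G ≃* ↥(G.map (MonoidHom.snd SO3 SO3)) := MulEquiv.ofBijective f₂' hbij2 with he₂
  have he₁app : ∀ g : ↥G, ((e₁ g : SO3)) = ((g : SO3 × SO3)).1 := fun g => rfl
  have he₂app : ∀ g : ↥G, ((e₂ g : SO3)) = ((g : SO3 × SO3)).2 := fun g => rfl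
  set ψ : ↥(G.map (MonoidHom.fst SO3 SO3)) ≃* ↥(G.map (MonoidHom.snd SO3 SO3)) :=
    e₁.symm.trans e₂ with hψdef
  have hψapp : ∀ a, (ψ a : SO3) = (((e₁.symm a : ↥G) : SO3 × SO3)).2 := fun a => rfl
  have hsymm1 : ∀ a, (((e₁.symm a : ↥G) : SO3 × SO3)).1 = (a : SO3) := by
    intro a
    have := congrArg Subtype.val (e₁.apply_symm_apply a)
    rw [← he₁app (e₁.symm a)]
    exact this
  refine ⟨hinj1, hinj2, ⟨e₁⟩, ψ, ?_⟩
  intro x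
  constructor
  · intro hx
    refine ⟨Subgroup.mem_map.mpr ⟨x, hx, rfl⟩, ?_⟩
    have hg : e₁.symm ⟨x.1, Subgroup.mem_map.mpr ⟨x, hx, rfl⟩⟩ = ⟨x, hx⟩ := by
      apply e₁.injective
      rw [MulEquiv.apply_symm_apply]
      exact Subtype.ext (he₁app ⟨x, hx⟩).symm
    rw [hψapp, hg]
  · rintro ⟨h, hpsi⟩
    have h1 : (((e₁.symm ⟨x.1, h⟩ : ↥G) : SO3 × SO3)).1 = x.1 := hsymm1 ⟨x.1, h⟩
    have h2 : (((e₁.symm ⟨x.1, h⟩ : ↥G) : SO3 × SO3)).2 = x.2 := by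
      rw [← hψapp]; exact hpsi
    have hx : ((e₁.symm ⟨x.1, h⟩ : ↥G) : SO3 × SO3) = x := Prod.ext h1 h2
    rw [← hx]
    exact (e₁.symm ⟨x.1, h⟩).2
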